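/- Let p > 2 be a prime, let d > 1 be a divisor of p-1, let n ≥ 1, and let H be a subgroup of F_n. Then: (i) the intersection of the subgroups H·N, taken over all normal subgroups N of F_n such that F_n/N lies in Ab(p)∗Ab(d), equals H·L_{n,p,d}; (ii) H·L_{n,p,d} has finite index in F_n; (iii) H·L_{n,p,d} is finitely generated. -/

import Mathlib

/-!
With `K = [F, F] · F^d`, the subgroup `L = [K, K] · K^p` is the smallest normal subgroup `N` with
`F / N` in `Ab(p) ∗ Ab(d)`: the `Ab(p)` part of such a quotient contains the image of `K`, so it
kills `[K, K]` and `K^p`; conversely `F / L` lies in the class, witnessed by `K / L`. It has finite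
index because a finitely generated abelian group of finite exponent is finite, applied to `F / K`
and then to `K / L` (`K` is finitely generated by Schreier's lemma). Hence `H · L` has finite index,
is finitely generated, and is the least of the subgroups `H · N`.
-/

/-- `subgroupPow m K` is the subgroup generated by all `m`-th powers of elements of `K`. -/
def subgroupPow {G : Type*} [Group G] (m : ℕ) (K : Subgroup G) : Subgroup G :=
  Subgroup.closure {x | ∃ u ∈ K, u ^ m = x}

/-- `Kgen n m = [F_n, F_n] · pow_m(F_n)`. -/
def Kgen (n m : ℕ) : Subgroup (FreeGroup (Fin n)) :=
  ⁅(⊤ : Subgroup (FreeGroup (Fin n))), (⊤ : Subgroup (FreeGroup (Fin n)))⁆ ⊔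
    subgroupPow m (⊤ : Subgroup (FreeGroup (Fin n)))

/-- `Lgen n p d = [K_{n,d}, K_{n,d}] · pow_p(K_{n,d})`. -/
def Lgen (n p d : ℕ) : Subgroup (FreeGroup (Fin n)) :=
  ⁅Kgen n d, Kgen n d⁆ ⊔ subgroupPow p (Kgen n d)

open scoped commutatorElement

/-- A group `G` lies in `Ab(p) ∗ Ab(d)` if it is finite and has a normal subgroup `N` that is
abelian of exponent dividing `p`, with `G/N` abelian of exponent dividing `d`. -/
def InAbStar (p d : ℕ) (G : Type*) [Group G] : Prop :=
  Finite G ∧ ∃ N : Subgroup G, N.Normal ∧ (∀ a ∈ N, ∀ b ∈ N, a * b = b * a) ∧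
    (∀ a ∈ N, a ^ p = 1) ∧ (∀ g h : G, ⁅g, h⁆ ∈ N) ∧ (∀ g : G, g ^ d ∈ N)

section

variable {G : Type*} [Group G]

lemma mem_subgroupPow {m : ℕ} {K : Subgroup G} {u : G} (hu : u ∈ K) :
    u ^ m ∈ subgroupPow m K :=
  Subgroup.subset_closure ⟨u, hu, rfl⟩

lemma subgroupPow_le_iff {m : ℕ} {K M : Subgroup G} :
    subgroupPow m K ≤ M ↔ ∀ u ∈ K, u ^ m ∈ M := by
  simp [subgroupPow, Subgroup.closure_le, Set.subset_def]

instance subgroupPow_normal (m : ℕ) (K : Subgroup G) [hK : K.Normal] :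
    (subgroupPow m K).Normal where
  conj_mem x hx g := by
    have hconj : (subgroupPow m K).map (MulAut.conj g).toMonoidHom ≤ subgroupPow m K := by
      rw [subgroupPow, MonoidHom.map_closure, Subgroup.closure_le]
      rintro _ ⟨_, ⟨u, hu, rfl⟩, rfl⟩
      exact Subgroup.subset_closure ⟨g * u * g⁻¹, hK.conj_mem u hu g, by simp [conj_pow]⟩
    exact hconj ⟨x, hx, rfl⟩

/-- `abVerbal m K = [K, K] · pow_m(K)`, the verbal subgroup of `K` for the variety `Ab(m)`. -/
def abVerbal (m : ℕ) (K : Subgroup G) : Subgroup G :=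
  ⁅K, K⁆ ⊔ subgroupPow m K

lemma abVerbal_le_iff {m : ℕ} {K M : Subgroup G} :
    abVerbal m K ≤ M ↔ (∀ g ∈ K, ∀ h ∈ K, ⁅g, h⁆ ∈ M) ∧ ∀ g ∈ K, g ^ m ∈ M := by
  rw [abVerbal, sup_le_iff, Subgroup.commutator_le, subgroupPow_le_iff]

lemma commutator_mem_abVerbal {m : ℕ} {K : Subgroup G} {g h : G} (hg : g ∈ K) (hh : h ∈ K) :
    ⁅g, h⁆ ∈ abVerbal m K :=
  (abVerbal_le_iff.mp le_rfl).1 g hg h hh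

lemma pow_mem_abVerbal {m : ℕ} {K : Subgroup G} {g : G} (hg : g ∈ K) :
    g ^ m ∈ abVerbal m K :=
  (abVerbal_le_iff.mp le_rfl).2 g hg

lemma abVerbal_le_self (m : ℕ) (K : Subgroup G) : abVerbal m K ≤ K :=
  abVerbal_le_iff.mpr
    ⟨fun _ hg _ hh => K.commutator_le_self (Subgroup.commutator_mem_commutator hg hh),
      fun _ hg => pow_mem hg m⟩

instance abVerbal_normal (m : ℕ) (K : Subgroup G) [K.Normal] : (abVerbal m K).Normal :=
  Subgroup.sup_normal _ _

open scoped IsMulCommutative in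
lemma finiteIndex_of_commutator_le_of_pow_mem [Group.FG G] {m : ℕ} (hm : 0 < m)
    {N : Subgroup G} (hcomm : commutator G ≤ N) (hpow : ∀ g : G, g ^ m ∈ N) : N.FiniteIndex := by
  have : N.Normal := Subgroup.Normal.of_commutator_le _ hcomm
  have : IsMulCommutative (G ⧸ N) :=
    Subgroup.Normal.quotient_commutative_iff_commutator_le.mpr hcomm
  have htors : IsMulTorsion (G ⧸ N) := by
    intro q
    induction q using QuotientGroup.induction_on with
    | H g =>
      refine isOfFinOrder_iff_pow_eq_one.mpr ⟨m, hm, ?_⟩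
      rw [← QuotientGroup.mk_pow, QuotientGroup.eq_one_iff]
      exact hpow g
  have : Finite (G ⧸ N) := CommGroup.finite_of_fg_isMulTorsion _ htors
  exact Subgroup.finiteIndex_of_finite_quotient

lemma relIndex_abVerbal_ne_zero {m : ℕ} (hm : 0 < m) (K : Subgroup G) [Group.FG K] :
    (abVerbal m K).relIndex K ≠ 0 := by
  have : ((abVerbal m K).subgroupOf K).FiniteIndex :=
    finiteIndex_of_commutator_le_of_pow_mem hm
      (Subgroup.commutator_le.mpr fun g _ h _ => by
        rw [Subgroup.mem_subgroupOf, ← K.coe_subtype, map_commutatorElement]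
        exact commutator_mem_abVerbal g.2 h.2)
      (fun g => by simpa [Subgroup.mem_subgroupOf] using pow_mem_abVerbal (m := m) g.2)
  exact Subgroup.FiniteIndex.index_ne_zero

variable {p d : ℕ}

lemma finiteIndex_abVerbal_abVerbal_top [Group.FG G] (hp : 0 < p) (hd : 0 < d) :
    (abVerbal p (abVerbal d (⊤ : Subgroup G))).FiniteIndex := by
  set K := abVerbal d (⊤ : Subgroup G)
  have : K.FiniteIndex := finiteIndex_of_commutator_le_of_pow_mem hd
    ((commutator_def G).trans_le le_sup_left) fun g => pow_mem_abVerbal (Subgroup.mem_top g)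
  refine ⟨?_⟩
  rw [← Subgroup.relIndex_mul_index (abVerbal_le_self p K)]
  exact mul_ne_zero (relIndex_abVerbal_ne_zero hp K) Subgroup.FiniteIndex.index_ne_zero

lemma abVerbal_abVerbal_le_of_inAbStar {N : Subgroup G} [N.Normal]
    (h : InAbStar p d (G ⧸ N)) : abVerbal p (abVerbal d (⊤ : Subgroup G)) ≤ N := by
  obtain ⟨-, M, -, hMcomm, hMpow, hcomm_mem, hpow_mem⟩ := h
  let π := QuotientGroup.mk' N
  have hK : abVerbal d (⊤ : Subgroup G) ≤ M.comap π := abVerbal_le_iff.mpr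
    ⟨fun g _ h _ => by simpa [map_commutatorElement] using hcomm_mem (π g) (π h),
      fun g _ => by simpa using hpow_mem (π g)⟩
  suffices abVerbal p (abVerbal d (⊤ : Subgroup G)) ≤ π.ker by
    rwa [QuotientGroup.ker_mk'] at this
  refine abVerbal_le_iff.mpr ⟨fun g hg h hh => ?_, fun g hg => ?_⟩
  · rw [MonoidHom.mem_ker, map_commutatorElement, commutatorElement_eq_one_iff_mul_comm]
    exact hMcomm _ (hK hg) _ (hK hh)
  · rw [MonoidHom.mem_ker, map_pow]
    exact hMpow _ (hK hg)

lemma inAbStar_quotient_abVerbal_abVerbal [Group.FG G] (hp : 0 < p) (hd : 0 < d) :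
    InAbStar p d (G ⧸ abVerbal p (abVerbal d (⊤ : Subgroup G))) := by
  set K := abVerbal d (⊤ : Subgroup G)
  set π := QuotientGroup.mk' (abVerbal p K)
  have := finiteIndex_abVerbal_abVerbal_top (G := G) hp hd
  refine ⟨inferInstance, K.map π, (abVerbal_normal d ⊤).map π (QuotientGroup.mk'_surjective _),
    ?_, ?_, ?_, ?_⟩
  · rintro _ ⟨g, hg, rfl⟩ _ ⟨h, hh, rfl⟩
    rw [← commutatorElement_eq_one_iff_mul_comm, ← map_commutatorElement, ← MonoidHom.mem_ker,
      QuotientGroup.ker_mk']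
    exact commutator_mem_abVerbal hg hh
  · rintro _ ⟨g, hg, rfl⟩
    rw [← map_pow, ← MonoidHom.mem_ker, QuotientGroup.ker_mk']
    exact pow_mem_abVerbal hg
  · intro g h
    induction g using QuotientGroup.induction_on with | H g =>
    induction h using QuotientGroup.induction_on with | H h =>
    exact ⟨⁅g, h⁆, commutator_mem_abVerbal trivial trivial, map_commutatorElement π g h⟩
  · intro g
    induction g using QuotientGroup.induction_on with | H g =>
    exact ⟨g ^ d, pow_mem_abVerbal trivial, map_pow π g d⟩

end

theorem stmt_3_general (p d n : ℕ) (hp : p.Prime) (hd : 1 < d)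
    (H : Subgroup (FreeGroup (Fin n))) :
    (⨅ N ∈ {N : Subgroup (FreeGroup (Fin n)) |
        ∃ hN : N.Normal, letI := hN; InAbStar p d (FreeGroup (Fin n) ⧸ N)},
      H ⊔ N) = H ⊔ Lgen n p d ∧
    (H ⊔ Lgen n p d).FiniteIndex ∧
    (H ⊔ Lgen n p d).FG := by
  have hd0 : 0 < d := by omega
  have : (Lgen n p d).FiniteIndex := finiteIndex_abVerbal_abVerbal_top hp.pos hd0
  have hfi : (H ⊔ Lgen n p d).FiniteIndex := Subgroup.finiteIndex_of_le le_sup_right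
  refine ⟨le_antisymm ?_ ?_, hfi, (Group.fg_iff_subgroup_fg _).mp inferInstance⟩
  · exact iInf₂_le _
      ⟨abVerbal_normal p (abVerbal d ⊤), inAbStar_quotient_abVerbal_abVerbal hp.pos hd0⟩
  · refine le_iInf₂ fun N ⟨hN, hAb⟩ => sup_le_sup_left ?_ H
    exact abVerbal_abVerbal_le_of_inAbStar hAb

/-- (i) The intersection of the subgroups `H · N`, over all normal subgroups `N` of `F_n` with
`F_n / N ∈ Ab(p) ∗ Ab(d)`, equals `H · L_{n,p,d}`; (ii) `H · L_{n,p,d}` has finite index in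
`F_n`; (iii) `H · L_{n,p,d}` is finitely generated. -/
theorem stmt_3 (p d n : ℕ) (hp : p.Prime) (hp2 : 2 < p) (hd : 1 < d)
    (hdvd : d ∣ p - 1) (hn : 1 ≤ n) (H : Subgroup (FreeGroup (Fin n))) :
    (⨅ N ∈ {N : Subgroup (FreeGroup (Fin n)) |
        ∃ hN : N.Normal, letI := hN; InAbStar p d (FreeGroup (Fin n) ⧸ N)},
      H ⊔ N) = H ⊔ Lgen n p d ∧
    (H ⊔ Lgen n p d).FiniteIndex ∧
    (H ⊔ Lgen n p d).FG :=
  stmt_3_general p d n hp hd H
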